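/- Let s ≥ 7 and let Z be a set of s points of P^1 x P^1 in multiplicity 1 generic position, with I = I(Z). Then I^2 ≠ I^(2). -/

import Mathlib

open MvPolynomial

noncomputable section

/-- The weights giving the bigrading on `k[x0,x1,y0,y1]` with
`deg x0 = deg x1 = (1,0)` and `deg y0 = deg y1 = (0,1)`. -/
def w4 : Fin 4 → ℕ × ℕ := ![(1,0), (1,0), (0,1), (0,1)]

variable (k : Type*) [Field k]

/-- `p = ((a0,a1),(b0,b1))` represents a point `[a0:a1] × [b0:b1]` of `P^1 × P^1`
if neither pair of coordinates is identically zero. -/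
def IsPtRep (p : (k × k) × (k × k)) : Prop := p.1 ≠ 0 ∧ p.2 ≠ 0

/-- Two (nonzero) vectors of `k²` define the same point of `P^1`. -/
def ProjEq (u v : k × k) : Prop := u.1 * v.2 = u.2 * v.1

/-- Two representatives define the same point of `P^1 × P^1`. -/
def PtEq (p q : (k × k) × (k × k)) : Prop := ProjEq k p.1 q.1 ∧ ProjEq k p.2 q.2

/-- The bihomogeneous ideal of the point `[a0:a1] × [b0:b1]`, namely
`(a1*x0 - a0*x1, b1*y0 - b0*y1)`. -/
def pointIdeal (p : (k × k) × (k × k)) : Ideal (MvPolynomial (Fin 4) k) :=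
  Ideal.span {C p.1.2 * X 0 - C p.1.1 * X 1, C p.2.2 * X 2 - C p.2.1 * X 3}

/-- The ideal `I(Z) = ∩ I(P_i)` of a finite tuple of points. -/
def idealOfPoints {s : ℕ} (Z : Fin s → (k × k) × (k × k)) :
    Ideal (MvPolynomial (Fin 4) k) :=
  ⨅ i, pointIdeal k (Z i)

/-- The `m`-th symbolic power `I(Z)^(m) = ∩ I(P_i)^m`. -/
def symbolicPower {s : ℕ} (Z : Fin s → (k × k) × (k × k)) (m : ℕ) :
    Ideal (MvPolynomial (Fin 4) k) :=
  ⨅ i, (pointIdeal k (Z i)) ^ m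

/-- The bigraded piece `J_(i,j)` of a bihomogeneous ideal, as a `k`-subspace. -/
def bipiece (J : Ideal (MvPolynomial (Fin 4) k)) (d : ℕ × ℕ) :
    Submodule k (MvPolynomial (Fin 4) k) :=
  (Submodule.restrictScalars k J) ⊓ (weightedHomogeneousSubmodule k w4 d)

/-- `α(J)`: the least total degree `t = i + j` in which `J` has a nonzero
bihomogeneous element of bidegree `(i,j)`. -/
def alpha (J : Ideal (MvPolynomial (Fin 4) k)) : ℕ :=
  sInf {t | ∃ F ∈ J, F ≠ 0 ∧ ∃ d : ℕ × ℕ, d.1 + d.2 = t ∧ F.IsWeightedHomogeneous w4 d}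

/-- The coordinates of a tuple of points of `P^1 × P^1`, as a point of affine `4s`-space. -/
def coordsOf {s : ℕ} (Z : Fin s → (k × k) × (k × k)) : Fin s × Fin 4 → k :=
  fun p => ![(Z p.1).1.1, (Z p.1).1.2, (Z p.1).2.1, (Z p.1).2.2] p.2

/-- The weights making `k[(P^1 × P^1)^s]` multigraded. -/
def wProd (s : ℕ) : Fin s × Fin 4 → (Fin s → ℕ × ℕ) := fun p => Pi.single p.1 (w4 p.2)

/-- `GeneralPosition k s P` says that property `P` holds for `s` general points of
`P^1 × P^1`: there is a nonempty Zariski-open subset `U` of `(P^1 × P^1)^s` (the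
complement of the zero locus of a multihomogeneous form `G` not vanishing identically)
such that `P` holds for every tuple of pairwise distinct points lying in `U`. -/
def GeneralPosition (s : ℕ) (P : (Fin s → (k × k) × (k × k)) → Prop) : Prop :=
  ∃ (G : MvPolynomial (Fin s × Fin 4) k) (d : Fin s → ℕ × ℕ),
    G.IsWeightedHomogeneous (wProd s) d ∧
    (∃ Z : Fin s → (k × k) × (k × k), (∀ i, IsPtRep k (Z i)) ∧ eval (coordsOf k Z) G ≠ 0) ∧
    ∀ Z : Fin s → (k × k) × (k × k), (∀ i, IsPtRep k (Z i)) →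
      (∀ i j, i ≠ j → ¬ PtEq k (Z i) (Z j)) →
      eval (coordsOf k Z) G ≠ 0 → P Z

/-- Distinct points in multiplicity 1 generic position: every subset `S` imposes
independent conditions in every bidegree, i.e.
`dim_k I(S)_(i,j) = max {0, (i+1)(j+1) - |S|}`. -/
def Mult1Generic {s : ℕ} (Z : Fin s → (k × k) × (k × k)) : Prop :=
  (∀ i, IsPtRep k (Z i)) ∧ (∀ i j, i ≠ j → ¬ PtEq k (Z i) (Z j)) ∧
  ∀ (S : Finset (Fin s)) (i j : ℕ),
    Module.finrank k ↥(bipiece k (⨅ a ∈ S, pointIdeal k (Z a)) (i, j))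
      = (i + 1) * (j + 1) - S.card

/-! In bidegree `(3, n)`, `n = ⌊s/2⌋ + ⌊s/3⌋`, generic position kills `I_(a,b)` whenever
`(a+1)(b+1) ≤ s`, so the only product surviving in `(I^2)_(3,n)` is `I_(1,⌊s/2⌋) · I_(2,⌊s/3⌋)`,
of dimension at most `(2⌊s/2⌋ + 2 - s)(3⌊s/3⌋ + 3 - s) ≤ 6`. A double point imposes at most three
conditions on forms of any bidegree: after a change of coordinates moving it to `x0 = y0 = 0`
they are the coefficients of the three monomials outside `(x0, y0)^2`. Hence
`dim I^(2)_(3,n) ≥ 4(n+1) - 3s`, and for `s ≥ 7` this exceeds the bound on `dim (I^2)_(3,n)`. -/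

open Module

instance Submodule.finite_mul {K A : Type*} [Field K] [Ring A] [Algebra K A]
    (p q : Submodule K A) [FiniteDimensional K p] [FiniteDimensional K q] :
    FiniteDimensional K ↥(p * q) := by
  rw [← Submodule.mulMap_range]
  infer_instance

theorem Submodule.finrank_mul_le {K A : Type*} [Field K] [Ring A] [Algebra K A]
    (p q : Submodule K A) [FiniteDimensional K p] [FiniteDimensional K q] :
    finrank K ↥(p * q) ≤ finrank K p * finrank K q := by
  rw [← Submodule.mulMap_range, ← Module.finrank_tensorProduct]
  exact LinearMap.finrank_range_le _

section Codimension

variable {K M : Type*} [Field K] [AddCommGroup M] [Module K M]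

theorem finrank_add_finrank_inf_inf_le (V W W' : Submodule K M) [FiniteDimensional K V] :
    finrank K ↥(W ⊓ V) + finrank K ↥(W' ⊓ V) ≤ finrank K V + finrank K ↥(W ⊓ W' ⊓ V) := by
  have hsup : W ⊓ V ⊔ W' ⊓ V ≤ V := sup_le inf_le_right inf_le_right
  rw [inf_inf_distrib_right W W' V, ← Submodule.finrank_sup_add_finrank_inf_eq]
  exact Nat.add_le_add_right (Submodule.finrank_mono hsup) _

theorem finrank_le_finrank_iInf_inf_add {ι : Type*} [Fintype ι] (V : Submodule K M)
    [FiniteDimensional K V] (W : ι → Submodule K M) (c : ℕ)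
    (hW : ∀ i, finrank K V ≤ finrank K ↥(W i ⊓ V) + c) :
    finrank K V ≤ finrank K ↥((⨅ i, W i) ⊓ V) + Fintype.card ι * c := by
  classical
  suffices ∀ T : Finset ι, finrank K V ≤ finrank K ↥(T.inf W ⊓ V) + T.card * c by
    rw [← Finset.inf_univ_eq_iInf, ← Finset.card_univ]
    exact this Finset.univ
  intro T
  induction T using Finset.induction_on with
  | empty => rw [Finset.inf_empty, top_inf_eq]; simp
  | insert a T ha ih =>
    rw [Finset.inf_insert, Finset.card_insert_of_notMem ha]
    have := finrank_add_finrank_inf_inf_le V (W a) (T.inf W)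
    have := hW a
    linarith

theorem finrank_le_finrank_inf_add_of_ker_le {ι : Type*} [Fintype ι] (V W : Submodule K M)
    [FiniteDimensional K V] (f : M →ₗ[K] ι → K) (hf : ∀ x ∈ V, f x = 0 → x ∈ W) :
    finrank K V ≤ finrank K ↥(W ⊓ V) + Fintype.card ι := by
  let φ := f.comp V.subtype
  have hker : (LinearMap.ker φ).map V.subtype ≤ W ⊓ V := by
    rintro _ ⟨x, hx, rfl⟩
    exact ⟨hf x x.2 hx, x.2⟩
  have hrange := (LinearMap.range φ).finrank_le
  rw [Module.finrank_fintype_fun_eq_card] at hrange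
  have := (Submodule.equivMapOfInjective _ V.injective_subtype _).finrank_eq.trans_le
    (Submodule.finrank_mono hker)
  rw [← φ.finrank_range_add_finrank_ker]
  omega

end Codimension

theorem MvPolynomial.IsWeightedHomogeneous.aeval {σ τ R M : Type*} [CommSemiring R]
    [AddCommMonoid M] {w : σ → M} {w' : τ → M} {p : MvPolynomial σ R} {m : M}
    (hp : p.IsWeightedHomogeneous w m) {f : σ → MvPolynomial τ R}
    (hf : ∀ i, (f i).IsWeightedHomogeneous w' (w i)) :
    (aeval f p).IsWeightedHomogeneous w' m := by
  induction hp using IsWeightedHomogeneous.induction_on with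
  | zero => simpa using isWeightedHomogeneous_zero R w' m
  | add p q _ _ hp hq => simpa using hp.add hq
  | monomial d r hd =>
    rw [aeval_monomial, algebraMap_eq, ← hd, Finsupp.weight_apply, Finsupp.sum]
    exact (IsWeightedHomogeneous.prod _ _ _ fun i _ => (hf i).pow (d i)).C_mul r

variable {k}

local notation "𝒜" => weightedHomogeneousSubmodule k w4

lemma weight_w4 (m : Fin 4 →₀ ℕ) : Finsupp.weight w4 m = (m 0 + m 1, m 2 + m 3) := by
  simp [Finsupp.weight_eq_sum, Fin.sum_univ_four, w4, Prod.ext_iff]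

instance (d : ℕ × ℕ) : FiniteDimensional k (𝒜 d) := by
  rw [weightedHomogeneousSubmodule_eq_finsupp_supported]
  have hfin : {m | Finsupp.weight w4 m = d}.Finite :=
    (Finsupp.finite_of_degree_eq (σ := Fin 4) (d.1 + d.2)).subset fun m hm => by
      simp only [Set.mem_ofPred_eq, weight_w4] at hm
      simp only [Set.mem_ofPred_eq, Finsupp.degree_eq_sum, Fin.sum_univ_four, ← hm]
      ring
  have := hfin.to_subtype
  exact Module.Finite.of_basis (basisRestrictSupport k _)

instance (J : Ideal (MvPolynomial (Fin 4) k)) (d : ℕ × ℕ) : FiniteDimensional k (bipiece k J d) :=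
  Submodule.finiteDimensional_of_le inf_le_right

lemma monomial_mem_span_X_zero_X_two_sq {m : Fin 4 →₀ ℕ} (hm : 2 ≤ m 0 + m 2) (c : k) :
    monomial m c ∈ Ideal.span {X 0, X 2} ^ 2 := by
  set J : Ideal (MvPolynomial (Fin 4) k) := Ideal.span {X 0, X 2}
  have hX : X 0 ^ m 0 * X 2 ^ m 2 ∈ J ^ 2 := by
    refine Ideal.pow_le_pow_right hm ?_
    rw [pow_add]
    exact Ideal.mul_mem_mul (Ideal.pow_mem_pow (Ideal.subset_span (by simp)) _)
      (Ideal.pow_mem_pow (Ideal.subset_span (by simp)) _)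
  have hmon : monomial m c = X 0 ^ m 0 * X 2 ^ m 2 * (C c * X 1 ^ m 1 * X 3 ^ m 3) := by
    rw [monomial_eq, Finsupp.prod_fintype _ _ (fun _ => pow_zero _), Fin.prod_univ_four]
    ring
  rw [hmon]
  exact Ideal.mul_mem_right _ _ hX

lemma mem_span_X_zero_X_two_sq_of_coeff_eq_zero {x : MvPolynomial (Fin 4) k}
    (hx : ∀ m : Fin 4 →₀ ℕ, m 0 + m 2 ≤ 1 → coeff m x = 0) :
    x ∈ Ideal.span {X 0, X 2} ^ 2 := by
  rw [x.as_sum]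
  refine Ideal.sum_mem _ fun m hm => monomial_mem_span_X_zero_X_two_sq ?_ _
  by_contra! h
  exact mem_support_iff.mp hm (hx m (by omega))

/-- The exponents of `x1^a y1^b`, `x0 x1^(a-1) y1^b`, `x1^a y0 y1^(b-1)`: the only monomials of
bidegree `(a,b)` outside `(x0,y0)^2`. -/
def lowExponent (a b : ℕ) : Fin 3 → (Fin 4 →₀ ℕ) :=
  ![Finsupp.equivFunOnFinite.symm ![0, a, 0, b],
    Finsupp.equivFunOnFinite.symm ![1, a - 1, 0, b],
    Finsupp.equivFunOnFinite.symm ![0, a, 1, b - 1]]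

lemma exists_lowExponent_eq {a b : ℕ} {m : Fin 4 →₀ ℕ} (hm : Finsupp.weight w4 m = (a, b))
    (h : m 0 + m 2 ≤ 1) : ∃ t, lowExponent a b t = m := by
  rw [weight_w4, Prod.mk.injEq] at hm
  have : (m 0 = 0 ∧ m 2 = 0) ∨ (m 0 = 1 ∧ m 2 = 0) ∨ (m 0 = 0 ∧ m 2 = 1) := by omega
  rcases this with h' | h' | h' <;> [use 0; use 1; use 2] <;> ext j <;> fin_cases j <;>
    simp only [lowExponent, Fin.isValue, Fin.zero_eta, Fin.mk_one, Fin.reduceFinMk,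
      Matrix.cons_val, Finsupp.equivFunOnFinite_symm_apply_apply] <;> omega

lemma finrank_le_finrank_bipiece_span_X_zero_X_two_sq_add_three (d : ℕ × ℕ) :
    finrank k (𝒜 d) ≤ finrank k (bipiece k (Ideal.span {X 0, X 2} ^ 2) d) + 3 := by
  let f : MvPolynomial (Fin 4) k →ₗ[k] Fin 3 → k :=
    LinearMap.pi fun t => lcoeff k (lowExponent d.1 d.2 t)
  have key := finrank_le_finrank_inf_add_of_ker_le (𝒜 d)
    ((Ideal.span {X 0, X 2} ^ 2).restrictScalars k) f fun x hx hfx => ?_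
  · rwa [Fintype.card_fin] at key
  refine mem_span_X_zero_X_two_sq_of_coeff_eq_zero fun m hm => ?_
  by_contra hne
  obtain ⟨t, rfl⟩ := exists_lowExponent_eq (hx hne) hm
  exact hne (congrFun hfx t)

lemma exists_mul_sub_mul_eq_one {a : k × k} (ha : a ≠ 0) : ∃ u v : k, a.2 * u - a.1 * v = 1 := by
  by_cases h2 : a.2 = 0
  · have h1 : a.1 ≠ 0 := fun h1 => ha (Prod.ext h1 h2)
    exact ⟨0, -a.1⁻¹, by field_simp [h2]; simp⟩
  · exact ⟨a.2⁻¹, 0, by field_simp; simp⟩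

lemma exists_algHom_map_span_X_zero_X_two_eq_pointIdeal {p : (k × k) × (k × k)}
    (hp : IsPtRep k p) :
    ∃ σ : MvPolynomial (Fin 4) k →ₐ[k] MvPolynomial (Fin 4) k, Function.Injective σ ∧
      (∀ i, (σ (X i)).IsWeightedHomogeneous w4 (w4 i)) ∧
      (Ideal.span {X 0, X 2}).map σ = pointIdeal k p := by
  obtain ⟨⟨a₀, a₁⟩, b₀, b₁⟩ := p
  obtain ⟨u, v, huv⟩ := exists_mul_sub_mul_eq_one hp.1
  obtain ⟨w, z, hwz⟩ := exists_mul_sub_mul_eq_one hp.2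
  have huv' : C a₁ * C u - C a₀ * C v = (1 : MvPolynomial (Fin 4) k) := by
    rw [← C_mul, ← C_mul, ← C_sub, huv, C_1]
  have hwz' : C b₁ * C w - C b₀ * C z = (1 : MvPolynomial (Fin 4) k) := by
    rw [← C_mul, ← C_mul, ← C_sub, hwz, C_1]
  -- Complete each equation of `p` to a linear change of coordinates of determinant one.
  let σ : MvPolynomial (Fin 4) k →ₐ[k] MvPolynomial (Fin 4) k := aeval ![C a₁ * X 0 - C a₀ * X 1,
    C u * X 1 - C v * X 0, C b₁ * X 2 - C b₀ * X 3, C w * X 3 - C z * X 2]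
  let τ : MvPolynomial (Fin 4) k →ₐ[k] MvPolynomial (Fin 4) k := aeval ![C u * X 0 + C a₀ * X 1,
    C v * X 0 + C a₁ * X 1, C w * X 2 + C b₀ * X 3, C z * X 2 + C b₁ * X 3]
  have hτσ : τ.comp σ = AlgHom.id k _ := by
    refine algHom_ext fun i => ?_
    fin_cases i <;>
      simp only [σ, τ, AlgHom.comp_apply, aeval_X, aeval_C, algebraMap_eq, AlgHom.id_apply, map_sub,
        map_mul, Fin.isValue, Fin.zero_eta, Fin.mk_one, Fin.reduceFinMk, Matrix.cons_val]
    · linear_combination X 0 * huv'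
    · linear_combination X 1 * huv'
    · linear_combination X 2 * hwz'
    · linear_combination X 3 * hwz'
  refine ⟨σ, Function.LeftInverse.injective (g := τ) (AlgHom.congr_fun hτσ), fun i => ?_, ?_⟩
  · have hX (j : Fin 4) (c : k) :
        (C c * X j : MvPolynomial (Fin 4) k).IsWeightedHomogeneous w4 (w4 j) :=
      (isWeightedHomogeneous_X k w4 j).C_mul c
    fin_cases i
    · simpa [σ] using (hX 0 a₁).sub (hX 1 a₀)
    · simpa [σ] using (hX 1 u).sub (hX 0 v)
    · simpa [σ] using (hX 2 b₁).sub (hX 3 b₀)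
    · simpa [σ] using (hX 3 w).sub (hX 2 z)
  · rw [Ideal.map_span, Set.image_pair]
    simp [σ, pointIdeal]

lemma finrank_bipiece_le_finrank_bipiece_map
    {σ : MvPolynomial (Fin 4) k →ₐ[k] MvPolynomial (Fin 4) k} (hinj : Function.Injective σ)
    (hσ : ∀ i, (σ (X i)).IsWeightedHomogeneous w4 (w4 i))
    (J : Ideal (MvPolynomial (Fin 4) k)) (d : ℕ × ℕ) :
    finrank k (bipiece k J d) ≤ finrank k (bipiece k (J.map σ) d) := by
  have hmap : (bipiece k J d).map σ.toLinearMap ≤ bipiece k (J.map σ) d := by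
    rintro _ ⟨x, ⟨hxJ, hxd⟩, rfl⟩
    refine ⟨Ideal.mem_map_of_mem σ hxJ, ?_⟩
    rw [AlgHom.toLinearMap_apply, aeval_unique σ]
    exact IsWeightedHomogeneous.aeval hxd hσ
  exact (Submodule.equivMapOfInjective σ.toLinearMap hinj _).finrank_eq.trans_le
    (Submodule.finrank_mono hmap)

lemma finrank_le_finrank_bipiece_pointIdeal_sq_add_three {p : (k × k) × (k × k)}
    (hp : IsPtRep k p) (d : ℕ × ℕ) :
    finrank k (𝒜 d) ≤ finrank k (bipiece k (pointIdeal k p ^ 2) d) + 3 := by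
  obtain ⟨σ, hinj, hσ, hmap⟩ := exists_algHom_map_span_X_zero_X_two_eq_pointIdeal hp
  have := finrank_bipiece_le_finrank_bipiece_map hinj hσ (Ideal.span {X 0, X 2} ^ 2) d
  rw [Ideal.map_pow, hmap] at this
  have := finrank_le_finrank_bipiece_span_X_zero_X_two_sq_add_three (k := k) d
  omega

attribute [local instance] MvPolynomial.weightedGradedAlgebra

lemma pointIdeal_isHomogeneous (p : (k × k) × (k × k)) : (pointIdeal k p).IsHomogeneous 𝒜 := by
  have hX (j : Fin 4) (c : k) : (C c * X j : MvPolynomial (Fin 4) k) ∈ 𝒜 (w4 j) :=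
    (isWeightedHomogeneous_X k w4 j).C_mul c
  refine Ideal.homogeneous_span _ _ ?_
  rintro x (rfl | rfl)
  · exact ⟨(1, 0), (hX 0 _).sub (hX 1 _)⟩
  · exact ⟨(0, 1), (hX 2 _).sub (hX 3 _)⟩

lemma bipiece_sq_le_iSup_mul {I : Ideal (MvPolynomial (Fin 4) k)} (hI : I.IsHomogeneous 𝒜)
    (d : ℕ × ℕ) :
    bipiece k (I ^ 2) d ≤
      ⨆ (e : (ℕ × ℕ) × (ℕ × ℕ)) (_ : e.1 + e.2 = d), bipiece k I e.1 * bipiece k I e.2 := by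
  have key : ∀ y ∈ I * I, (DirectSum.decompose 𝒜 y d : MvPolynomial (Fin 4) k) ∈
      ⨆ (e : (ℕ × ℕ) × (ℕ × ℕ)) (_ : e.1 + e.2 = d), bipiece k I e.1 * bipiece k I e.2 := by
    intro y hy
    refine Submodule.mul_induction_on hy (fun m hm n hn => ?_) (fun y z hy hz => ?_)
    · classical
      rw [DirectSum.decompose_mul, DirectSum.coe_mul_apply]
      refine Submodule.sum_mem _ fun e he => ?_
      refine Submodule.mem_iSup_of_mem e <|
        Submodule.mem_iSup_of_mem (Finset.mem_filter.mp he).2 <|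
          Submodule.mul_mem_mul ⟨hI e.1 hm, SetLike.coe_mem _⟩ ⟨hI e.2 hn, SetLike.coe_mem _⟩
    · rw [DirectSum.decompose_add, DirectSum.add_apply, Submodule.coe_add]
      exact add_mem hy hz
  rintro x ⟨hx, hxd⟩
  rw [← DirectSum.decompose_of_mem_same 𝒜 hxd]
  exact key x (sq I ▸ hx)

lemma bipiece_sq_le_mul_of_eq_bot {I : Ideal (MvPolynomial (Fin 4) k)} (hI : I.IsHomogeneous 𝒜)
    {s : ℕ} (hs : 0 < s) (hvan : ∀ a b, (a + 1) * (b + 1) ≤ s → bipiece k I (a, b) = ⊥) :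
    bipiece k (I ^ 2) (3, s / 2 + s / 3) ≤ bipiece k I (1, s / 2) * bipiece k I (2, s / 3) := by
  refine (bipiece_sq_le_iSup_mul hI _).trans (iSup₂_le fun ⟨⟨a, b⟩, a', b'⟩ he => ?_)
  simp only [Prod.mk_add_mk, Prod.mk.injEq] at he
  by_cases hab : (a + 1) * (b + 1) ≤ s
  · rw [hvan a b hab, Submodule.bot_mul]; exact bot_le
  by_cases hab' : (a' + 1) * (b' + 1) ≤ s
  · rw [hvan a' b' hab', Submodule.mul_bot]; exact bot_le
  have : (a = 1 ∧ b = s / 2 ∧ a' = 2 ∧ b' = s / 3) ∨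
      (a = 2 ∧ b = s / 3 ∧ a' = 1 ∧ b' = s / 2) := by
    have : a ≤ 3 := by omega
    have : a' ≤ 3 := by omega
    interval_cases a <;> interval_cases a' <;> omega
  rcases this with ⟨rfl, rfl, rfl, rfl⟩ | ⟨rfl, rfl, rfl, rfl⟩
  · exact le_rfl
  · exact (Submodule.mul_comm _ _).le

lemma idealOfPoints_isHomogeneous {s : ℕ} (Z : Fin s → (k × k) × (k × k)) :
    (idealOfPoints k Z).IsHomogeneous 𝒜 :=
  Ideal.IsHomogeneous.iInf fun i => pointIdeal_isHomogeneous (Z i)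

lemma finrank_le_finrank_bipiece_symbolicPower_two_add {s : ℕ} {Z : Fin s → (k × k) × (k × k)}
    (hZ : ∀ i, IsPtRep k (Z i)) (d : ℕ × ℕ) :
    finrank k (𝒜 d) ≤ finrank k (bipiece k (symbolicPower k Z 2) d) + s * 3 := by
  have := finrank_le_finrank_iInf_inf_add (𝒜 d)
    (fun i => (pointIdeal k (Z i) ^ 2).restrictScalars k) 3
    fun i => finrank_le_finrank_bipiece_pointIdeal_sq_add_three (hZ i) d
  rwa [Fintype.card_fin, ← Submodule.restrictScalars_iInf] at this

namespace Mult1Generic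

variable {s : ℕ} {Z : Fin s → (k × k) × (k × k)} (hZ : Mult1Generic k Z)
include hZ

theorem finrank_weightedHomogeneousSubmodule (i j : ℕ) :
    finrank k (𝒜 (i, j)) = (i + 1) * (j + 1) := by
  have := hZ.2.2 ∅ i j
  rwa [show (⨅ a ∈ (∅ : Finset (Fin s)), pointIdeal k (Z a)) = ⊤ by simp,
    show bipiece k ⊤ (i, j) = 𝒜 (i, j) by ext; simp [bipiece], Finset.card_empty,
    Nat.sub_zero] at this

theorem finrank_bipiece_idealOfPoints (i j : ℕ) :
    finrank k (bipiece k (idealOfPoints k Z) (i, j)) = (i + 1) * (j + 1) - s := by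
  have := hZ.2.2 Finset.univ i j
  rwa [show (⨅ a ∈ Finset.univ, pointIdeal k (Z a)) = idealOfPoints k Z by simp [idealOfPoints],
    Finset.card_univ, Fintype.card_fin] at this

theorem bipiece_idealOfPoints_eq_bot {i j : ℕ} (h : (i + 1) * (j + 1) ≤ s) :
    bipiece k (idealOfPoints k Z) (i, j) = ⊥ :=
  Submodule.finrank_eq_zero.mp (by rw [hZ.finrank_bipiece_idealOfPoints]; omega)

theorem finrank_bipiece_sq_le (hs : 0 < s) :
    finrank k (bipiece k (idealOfPoints k Z ^ 2) (3, s / 2 + s / 3)) ≤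
      (2 * (s / 2 + 1) - s) * (3 * (s / 3 + 1) - s) :=
  calc _ ≤ finrank k ↥(bipiece k (idealOfPoints k Z) (1, s / 2) *
          bipiece k (idealOfPoints k Z) (2, s / 3)) :=
        Submodule.finrank_mono (bipiece_sq_le_mul_of_eq_bot (idealOfPoints_isHomogeneous Z) hs
          fun _ _ => hZ.bipiece_idealOfPoints_eq_bot)
    _ ≤ _ := Submodule.finrank_mul_le _ _
    _ = _ := by rw [hZ.finrank_bipiece_idealOfPoints, hZ.finrank_bipiece_idealOfPoints]

end Mult1Generic

theorem second_symbolic_ne_square_general {k : Type*} [Field k]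
    (s : ℕ) (hs : 7 ≤ s)
    (Z : Fin s → (k × k) × (k × k)) (hZ : Mult1Generic k Z) :
    idealOfPoints k Z ^ 2 ≠ symbolicPower k Z 2 := by
  intro h
  have hupper := hZ.finrank_bipiece_sq_le (by omega)
  have hlower := finrank_le_finrank_bipiece_symbolicPower_two_add hZ.1 (3, s / 2 + s / 3)
  rw [hZ.finrank_weightedHomogeneousSubmodule, ← h] at hlower
  have hδ₁ : 2 * (s / 2 + 1) - s = 1 ∨ 2 * (s / 2 + 1) - s = 2 := by omega
  have hδ₂ : 3 * (s / 3 + 1) - s = 1 ∨ 3 * (s / 3 + 1) - s = 2 ∨ 3 * (s / 3 + 1) - s = 3 := by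
    omega
  rcases hδ₁ with h₁ | h₁ <;> rcases hδ₂ with h₂ | h₂ | h₂ <;> rw [h₁, h₂] at hupper <;> omega

/-- For `s ≥ 7` points of `P^1 × P^1` in multiplicity 1 generic
position, `I^2 ≠ I^(2)`. -/
theorem second_symbolic_ne_square {k : Type*} [Field k] [IsAlgClosed k]
    (s : ℕ) (hs : 7 ≤ s)
    (Z : Fin s → (k × k) × (k × k)) (hZ : Mult1Generic k Z) :
    idealOfPoints k Z ^ 2 ≠ symbolicPower k Z 2 :=
  second_symbolic_ne_square_general s hs Z hZ
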